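/- arXiv:0901.0959 — 2 statements merged into one kernel-verified Lean document; each statement's English description precedes it below -/
import Mathlib

section
/- Let H be a semisimple and unimodular finite-dimensional Hopf algebra over a field k, let B be an H-module algebra with action ▷, let A ⊆ B be a two-sided ideal with unit 1_A such that B = H ▷ A, and consider the induced symmetric partial action h·a = 1_A(h ▷ a), assuming h·1_A is central in A for all h. If 1_A·B^H = A^{\underline{H}}, then the partial trace map tr(a) = t·a (for t a nonzero left integral of H) is surjective onto A^{\underline{H}}. -/
open TensorProduct

/-- A (left) `H`-module algebra: a unital `k`-algebra `B` together with a left `H`-module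
structure `act : H →ₗ[k] B →ₗ[k] B`, `h ⊗ b ↦ h ▷ b`, such that
`h ▷ (ab) = Σ (h₁ ▷ a)(h₂ ▷ b)` and `h ▷ 1 = ε(h)1`. -/
structure ModuleAlgebra (k H B : Type*) [CommSemiring k] [Semiring H] [HopfAlgebra k H]
    [Semiring B] [Algebra k B] where
  act : H →ₗ[k] B →ₗ[k] B
  one_act : ∀ b : B, act 1 b = b
  mul_act : ∀ (g h : H) (b : B), act (g * h) b = act g (act h b)
  act_mul : ∀ (h : H) (a b : B),
    act h (a * b) = LinearMap.mul' k B
      (TensorProduct.map (act.flip a) (act.flip b) (Coalgebra.comul h))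
  act_one : ∀ h : H, act h 1 = (Coalgebra.counit (R := k) h) • (1 : B)

/-!
If `a ∈ A^{\underline{H}}`, the hypothesis `e·B^H = A^{\underline{H}}` writes `a = e b` with `b`
invariant, so `t ▷ b = ε(t) b`. Unimodularity makes `t` a right integral, hence
`t ▷ (h ▷ a') = ε(h) t ▷ a'`; as `B = H ▷ A`, every `t ▷ x` is `t ▷ c` for some `c ∈ A`.
Finally `t = ε(t) u` for the normalised integral `u`, so `ε(t) ≠ 0` and `a = e (t ▷ ε(t)⁻¹ c)`.
-/

section Integral

variable {k H : Type*} [CommSemiring k] [Semiring H] [Bialgebra k H]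

def IsLeftIntegral (t : H) : Prop :=
  ∀ h : H, h * t = Coalgebra.counit (R := k) h • t

def IsRightIntegral (t : H) : Prop :=
  ∀ h : H, t * h = Coalgebra.counit (R := k) h • t

theorem IsLeftIntegral.eq_counit_smul {t u : H} (ht : IsLeftIntegral (k := k) t)
    (hu : IsRightIntegral (k := k) u) (hεu : Coalgebra.counit (R := k) u = 1) :
    t = Coalgebra.counit (R := k) t • u := by
  rw [← hu t, ht u, hεu, one_smul]

theorem IsLeftIntegral.counit_ne_zero {t u : H} (ht : IsLeftIntegral (k := k) t) (ht0 : t ≠ 0)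
    (hu : IsRightIntegral (k := k) u) (hεu : Coalgebra.counit (R := k) u = 1) :
    Coalgebra.counit (R := k) t ≠ 0 := by
  intro h0
  exact ht0 (by rw [ht.eq_counit_smul hu hεu, h0, zero_smul])

end Integral

namespace ModuleAlgebra

variable {k H B : Type*} [CommSemiring k] [Semiring H] [HopfAlgebra k H] [Semiring B]
  [Algebra k B] (ρ : ModuleAlgebra k H B)

theorem act_act_of_isRightIntegral {t : H} (ht : IsRightIntegral (k := k) t) (h : H) (b : B) :
    ρ.act t (ρ.act h b) = ρ.act t (Coalgebra.counit (R := k) h • b) := by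
  rw [← ρ.mul_act, ht h, map_smul, LinearMap.smul_apply, map_smul]

theorem range_act_le_map_of_isRightIntegral {A : Submodule k B}
    (hspan : Submodule.span k {x : B | ∃ h : H, ∃ a ∈ A, x = ρ.act h a} = ⊤)
    {t : H} (ht : IsRightIntegral (k := k) t) :
    LinearMap.range (ρ.act t) ≤ A.map (ρ.act t) := by
  rw [LinearMap.range_eq_map, ← hspan, Submodule.map_span_le]
  rintro _ ⟨h, a, ha, rfl⟩
  exact ⟨_, A.smul_mem _ ha, (ρ.act_act_of_isRightIntegral ht h a).symm⟩

end ModuleAlgebra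

theorem partial_trace_surjective_general {k H B : Type*} [Field k] [Ring H] [HopfAlgebra k H]
    [Ring B] [Algebra k B] (ρ : ModuleAlgebra k H B)
    -- `H` is semisimple: there is a left integral with counit one
    (hss : ∃ u : H, (∀ h : H, h * u = (Coalgebra.counit (R := k) h) • u) ∧
      Coalgebra.counit (R := k) u = 1)
    -- `H` is unimodular: every left integral is a right integral
    (hunimod : ∀ u : H, (∀ h : H, h * u = (Coalgebra.counit (R := k) h) • u) →
      (∀ h : H, u * h = (Coalgebra.counit (R := k) h) • u))
    -- `A` is a two-sided ideal of `B` with unit `e`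
    (A : Submodule k B)
    (e : B)
    -- the induced partial action is admissible: `B = H ▷ A`
    (hadm : Submodule.span k {x : B | ∃ h : H, ∃ a ∈ A, x = ρ.act h a} = ⊤)
    -- `e·B^H = A^{\underline{H}}`
    (hinv : {x : B | ∃ b : B, (∀ h : H, ρ.act h b = (Coalgebra.counit (R := k) h) • b) ∧
        x = e * b} =
      {a : B | a ∈ A ∧ ∀ h : H, e * ρ.act h a = a * (e * ρ.act h e)})
    -- `t` is a nonzero left integral
    (t : H) (ht : t ≠ 0) (hint : ∀ h : H, h * t = (Coalgebra.counit (R := k) h) • t) :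
    ∀ a ∈ A, (∀ h : H, e * ρ.act h a = a * (e * ρ.act h e)) →
      ∃ c ∈ A, e * ρ.act t c = a := by
  obtain ⟨u, hu, hεu⟩ := hss
  have hεt := IsLeftIntegral.counit_ne_zero hint ht (hunimod u hu) hεu
  intro a ha hfix
  obtain ⟨b, hb, rfl⟩ : a ∈ {x : B | ∃ b : B,
      (∀ h : H, ρ.act h b = (Coalgebra.counit (R := k) h) • b) ∧ x = e * b} :=
    hinv ▸ ⟨ha, hfix⟩
  obtain ⟨c, hc, htc⟩ :=
    ρ.range_act_le_map_of_isRightIntegral hadm (hunimod t hint) (LinearMap.mem_range_self _ b)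
  refine ⟨(Coalgebra.counit (R := k) t)⁻¹ • c, A.smul_mem _ hc, ?_⟩
  rw [map_smul, htc, hb t, smul_smul, inv_mul_cancel₀ hεt, one_smul]

/-- let `H` be a semisimple, unimodular, finite-dimensional Hopf algebra,
`B` an `H`-module algebra, `A ⊆ B` a two-sided ideal with unit `e = 1_A` such that
`B = H ▷ A`, with induced (symmetric) partial action `h·a = e(h ▷ a)` having each `h·e`
central in `A`.  If `e·B^H = A^{\underline{H}}`, then the partial trace `tr(a) = t·a`,
for `t` a nonzero left integral, is surjective onto `A^{\underline{H}}`. -/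
theorem partial_trace_surjective {k H B : Type*} [Field k] [Ring H] [HopfAlgebra k H]
    [FiniteDimensional k H] [Ring B] [Algebra k B] (ρ : ModuleAlgebra k H B)
    -- `H` is semisimple: there is a left integral with counit one
    (hss : ∃ u : H, (∀ h : H, h * u = (Coalgebra.counit (R := k) h) • u) ∧
      Coalgebra.counit (R := k) u = 1)
    -- `H` is unimodular: every left integral is a right integral
    (hunimod : ∀ u : H, (∀ h : H, h * u = (Coalgebra.counit (R := k) h) • u) →
      (∀ h : H, u * h = (Coalgebra.counit (R := k) h) • u))
    -- `A` is a two-sided ideal of `B` with unit `e`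
    (A : Submodule k B)
    (hright : ∀ a ∈ A, ∀ b : B, a * b ∈ A) (hleft : ∀ a ∈ A, ∀ b : B, b * a ∈ A)
    (e : B) (he : e ∈ A) (heL : ∀ a ∈ A, e * a = a) (heR : ∀ a ∈ A, a * e = a)
    -- the induced partial action is admissible: `B = H ▷ A`
    (hadm : Submodule.span k {x : B | ∃ h : H, ∃ a ∈ A, x = ρ.act h a} = ⊤)
    -- each `h·e` is central in `A`
    (hcentral : ∀ h : H, ∀ a ∈ A, (e * ρ.act h e) * a = a * (e * ρ.act h e))
    -- `e·B^H = A^{\underline{H}}`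
    (hinv : {x : B | ∃ b : B, (∀ h : H, ρ.act h b = (Coalgebra.counit (R := k) h) • b) ∧
        x = e * b} =
      {a : B | a ∈ A ∧ ∀ h : H, e * ρ.act h a = a * (e * ρ.act h e)})
    -- `t` is a nonzero left integral
    (t : H) (ht : t ≠ 0) (hint : ∀ h : H, h * t = (Coalgebra.counit (R := k) h) • t) :
    ∀ a ∈ A, (∀ h : H, e * ρ.act h a = a * (e * ρ.act h e)) →
      ∃ c ∈ A, e * ρ.act t c = a :=
  partial_trace_surjective_general ρ hss hunimod A e hadm hinv t ht hint
end

section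
/- Let H be a finite-dimensional Hopf algebra over a field k and A a unital k-algebra with a symmetric partial action of H such that h·1_A is central, and regard A as a left A#H-module via (a#h) ▷ b = a(h·b). Then the map σ : A^{\underline{H}} → End(_{A#H}A)^{op} that sends a to right multiplication by a (σ(a)(b) = ba) is an algebra isomorphism; in particular, every left A#H-module endomorphism f of A satisfies f(a) = a·f(1_A) and f(1_A) ∈ A^{\underline{H}}. -/
/-!
If `h·1` is central and `c` is a partial invariant, then
`h·(bc) = Σ (h₁·b)(h₂·c) = Σ (h₁·b) c (h₂·1) = Σ (h₁·b)(h₂·1) c = (h·b) c`,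
so right multiplication by `c` commutes with every `a # h`. Conversely an `A#H`-linear `f`
satisfies `f a = f ((a # 1) ▷ 1) = a f(1)`, and `f(1)` is invariant because
`h·f(1) = f((1 # h) ▷ 1) = f(h·1) = (h·1) f(1) = f(1) (h·1)`.
-/

open TensorProduct

/-- A partial action of a Hopf algebra `H` on a unital `k`-algebra `A`:
a linear map `act : H →ₗ[k] A →ₗ[k] A`, `h ⊗ a ↦ h · a`, such that
(i) `h·(ab) = Σ (h₁·a)(h₂·b)`, (ii) `1·a = a`, and
(iii) `h·(g·a) = Σ (h₁·1)((h₂ g)·a)`. -/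
structure PartialAction (k H A : Type*) [CommSemiring k] [Semiring H] [HopfAlgebra k H]
    [Semiring A] [Algebra k A] where
  act : H →ₗ[k] A →ₗ[k] A
  one_act : ∀ a : A, act 1 a = a
  act_mul : ∀ (h : H) (a b : A),
    act h (a * b) = LinearMap.mul' k A
      (TensorProduct.map (act.flip a) (act.flip b) (Coalgebra.comul h))
  act_act : ∀ (h g : H) (a : A),
    act h (act g a) = LinearMap.mul' k A
      (TensorProduct.map (act.flip 1) ((act.flip a) ∘ₗ LinearMap.mulRight k g)
        (Coalgebra.comul h))

namespace PartialAction

variable {k H A : Type*} [CommSemiring k] [Semiring H] [HopfAlgebra k H] [Semiring A]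
  [Algebra k A] (α : PartialAction k H A)

/-- The partial invariants `A^{\underline{H}}`. -/
def IsInvariant (c : A) : Prop :=
  ∀ h : H, α.act h c = c * α.act h 1

theorem act_eq_mul'_act_one_act (h : H) (b : A) :
    α.act h b = LinearMap.mul' k A
      (TensorProduct.map (α.act.flip 1) (α.act.flip b) (Coalgebra.comul h)) := by
  have hmul_one : α.act.flip b ∘ₗ LinearMap.mulRight k (1 : H) = α.act.flip b := by
    ext g
    simp
  simpa only [α.one_act, hmul_one] using α.act_act h 1 b

theorem act_eq_mul'_act_act_one (h : H) (b : A) :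
    α.act h b = LinearMap.mul' k A
      (TensorProduct.map (α.act.flip b) (α.act.flip 1) (Coalgebra.comul h)) := by
  simpa only [mul_one] using α.act_mul h b 1

theorem act_mul_of_isInvariant
    (hcentral : ∀ (h : H) (a : A), α.act h 1 * a = a * α.act h 1)
    {c : A} (hc : α.IsInvariant c) (h : H) (b : A) :
    α.act h (b * c) = α.act h b * c := by
  have hmap : LinearMap.mul' k A ∘ₗ TensorProduct.map (α.act.flip b) (α.act.flip c) =
      LinearMap.mulRight k c ∘ₗ LinearMap.mul' k A ∘ₗ
        TensorProduct.map (α.act.flip b) (α.act.flip 1) := by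
    refine TensorProduct.ext' fun g g' => ?_
    simp only [LinearMap.comp_apply, TensorProduct.map_tmul, LinearMap.mul'_apply,
      LinearMap.flip_apply, LinearMap.mulRight_apply]
    rw [hc g', ← hcentral g' c, mul_assoc]
  rw [α.act_mul, ← LinearMap.comp_apply, hmap, α.act_eq_mul'_act_act_one h b]
  rfl

/-- `(a # h) ▷ b = a (h · b)`, where `a # h = m (a ⊗ h) (1 ⊗ 1)`. -/
theorem smash_act_apply {m : (A ⊗[k] H) →ₗ[k] (A ⊗[k] H) →ₗ[k] (A ⊗[k] H)}
    (hm : ∀ (a b : A) (h g : H), m (a ⊗ₜ[k] h) (b ⊗ₜ[k] g) =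
      TensorProduct.map ((LinearMap.mulLeft k a) ∘ₗ (α.act.flip b)) (LinearMap.mulRight k g)
        (Coalgebra.comul h))
    {Φ : (A ⊗[k] H) →ₗ[k] A →ₗ[k] A}
    (hΦ : ∀ (a : A) (h : H) (b : A), Φ (a ⊗ₜ[k] h) b = a * α.act h b)
    (a : A) (h : H) (b : A) :
    Φ (m (a ⊗ₜ[k] h) ((1 : A) ⊗ₜ[k] (1 : H))) b = a * α.act h b := by
  have hmap : Φ.flip b ∘ₗ TensorProduct.map
        (LinearMap.mulLeft k a ∘ₗ α.act.flip 1) (LinearMap.mulRight k (1 : H)) =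
      LinearMap.mulLeft k a ∘ₗ LinearMap.mul' k A ∘ₗ
        TensorProduct.map (α.act.flip 1) (α.act.flip b) := by
    refine TensorProduct.ext' fun g g' => ?_
    simp [hΦ, mul_assoc]
  rw [hm, α.act_eq_mul'_act_one_act h b, ← LinearMap.flip_apply (f := Φ),
    ← LinearMap.comp_apply, hmap]
  rfl

theorem smash_act_mul_of_isInvariant
    (hcentral : ∀ (h : H) (a : A), α.act h 1 * a = a * α.act h 1)
    {m : (A ⊗[k] H) →ₗ[k] (A ⊗[k] H) →ₗ[k] (A ⊗[k] H)}
    {Φ : (A ⊗[k] H) →ₗ[k] A →ₗ[k] A}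
    (hsmash : ∀ (a : A) (h : H) (b : A),
      Φ (m (a ⊗ₜ[k] h) ((1 : A) ⊗ₜ[k] (1 : H))) b = a * α.act h b)
    {c : A} (hc : α.IsInvariant c) :
    ∀ x ∈ LinearMap.range (m.flip ((1 : A) ⊗ₜ[k] (1 : H))),
      ∀ b : A, Φ x (b * c) = Φ x b * c := by
  rintro _ ⟨y, rfl⟩ b
  induction y using TensorProduct.induction_on with
  | zero => simp
  | tmul a h =>
    simp only [LinearMap.flip_apply, hsmash, α.act_mul_of_isInvariant hcentral hc, mul_assoc]
  | add y y' hy hy' => simp only [map_add, LinearMap.add_apply, hy, hy', add_mul]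

theorem apply_mul_act_of_smash_linear
    {m : (A ⊗[k] H) →ₗ[k] (A ⊗[k] H) →ₗ[k] (A ⊗[k] H)}
    {Φ : (A ⊗[k] H) →ₗ[k] A →ₗ[k] A}
    (hsmash : ∀ (a : A) (h : H) (b : A),
      Φ (m (a ⊗ₜ[k] h) ((1 : A) ⊗ₜ[k] (1 : H))) b = a * α.act h b)
    {f : A → A} (hf : ∀ x ∈ LinearMap.range (m.flip ((1 : A) ⊗ₜ[k] (1 : H))),
      ∀ b : A, f (Φ x b) = Φ x (f b))
    (a : A) (h : H) (b : A) :
    f (a * α.act h b) = a * α.act h (f b) := by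
  simpa only [LinearMap.flip_apply, hsmash] using hf _ ⟨a ⊗ₜ[k] h, rfl⟩ b

theorem apply_eq_mul_apply_one {f : A → A}
    (hf : ∀ (a : A) (h : H) (b : A), f (a * α.act h b) = a * α.act h (f b)) (a : A) :
    f a = a * f 1 := by
  simpa only [α.one_act, mul_one] using hf a 1 1

theorem isInvariant_apply_one
    (hcentral : ∀ (h : H) (a : A), α.act h 1 * a = a * α.act h 1)
    {f : A → A} (hf : ∀ (a : A) (h : H) (b : A), f (a * α.act h b) = a * α.act h (f b)) :
    α.IsInvariant (f 1) := fun h =>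
  calc α.act h (f 1) = f (α.act h 1) := by simpa only [one_mul] using (hf 1 h 1).symm
    _ = α.act h 1 * f 1 := α.apply_eq_mul_apply_one hf _
    _ = f 1 * α.act h 1 := hcentral h (f 1)

end PartialAction

theorem invariants_iso_smash_endomorphisms_general {k H A : Type*} [Field k] [Ring H]
    [HopfAlgebra k H] [Ring A] [Algebra k A]
    (α : PartialAction k H A)
    (hcentral : ∀ (h : H) (a : A), (α.act h 1) * a = a * (α.act h 1))
    (m : (A ⊗[k] H) →ₗ[k] (A ⊗[k] H) →ₗ[k] (A ⊗[k] H))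
    (hm : ∀ (a b : A) (h g : H), m (a ⊗ₜ[k] h) (b ⊗ₜ[k] g) =
      TensorProduct.map ((LinearMap.mulLeft k a) ∘ₗ (α.act.flip b)) (LinearMap.mulRight k g)
        (Coalgebra.comul h))
    (Φ : (A ⊗[k] H) →ₗ[k] A →ₗ[k] A)
    (hΦ : ∀ (a : A) (h : H) (b : A), Φ (a ⊗ₜ[k] h) b = a * α.act h b) :
    -- `σ(c)` is a left `A#H`-module endomorphism for each `c ∈ A^{\underline{H}}`
    (∀ c : A, (∀ h : H, α.act h c = c * α.act h 1) →
      ∀ x ∈ LinearMap.range (m.flip ((1 : A) ⊗ₜ[k] (1 : H))),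
        ∀ b : A, Φ x (b * c) = (Φ x b) * c) ∧
    -- `σ` is injective
    (∀ c c' : A, (∀ h : H, α.act h c = c * α.act h 1) →
      (∀ h : H, α.act h c' = c' * α.act h 1) → (∀ b : A, b * c = b * c') → c = c') ∧
    -- `σ` reverses multiplication (is an algebra map into the opposite algebra)
    (∀ c c' : A, (∀ h : H, α.act h c = c * α.act h 1) →
      (∀ h : H, α.act h c' = c' * α.act h 1) → ∀ b : A, b * (c * c') = (b * c) * c') ∧
    -- `σ` is surjective: every `A#H`-linear endomorphism of `A` is `σ(f(1))`
    (∀ f : A →ₗ[k] A,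
      (∀ x ∈ LinearMap.range (m.flip ((1 : A) ⊗ₜ[k] (1 : H))),
        ∀ b : A, f (Φ x b) = Φ x (f b)) →
      (∀ h : H, α.act h (f 1) = (f 1) * α.act h 1) ∧ (∀ a : A, f a = a * f 1)) := by
  have hsmash := α.smash_act_apply hm hΦ
  refine ⟨fun c hc => α.smash_act_mul_of_isInvariant hcentral hsmash hc,
    fun c c' _ _ hcc' => by simpa only [one_mul] using hcc' 1,
    fun c c' _ _ b => (mul_assoc b c c').symm, fun f hf => ?_⟩
  have hf' := α.apply_mul_act_of_smash_linear hsmash hf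
  exact ⟨α.isInvariant_apply_one hcentral hf', α.apply_eq_mul_apply_one hf'⟩

/-- for a symmetric partial action (with `h·1` central) of a
finite-dimensional `H` on `A`, with `A` a left `A#H`-module via `(a#h) ▷ b = a(h·b)`,
the map `σ : A^{\underline{H}} → End(_{A#H}A)ᵒᵖ`, `σ(a)(b) = ba`, is an algebra
isomorphism: right multiplications by partial invariants are `A#H`-linear, `σ` is
injective and anti-multiplicative, and every `A#H`-linear endomorphism `f` of `A`
satisfies `f(1) ∈ A^{\underline{H}}` and `f(a) = a·f(1)`.  Here `m` is the multiplication
of `A ⊗ H` and `Φ` the left `A#H`-action on `A`. -/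
theorem invariants_iso_smash_endomorphisms {k H A : Type*} [Field k] [Ring H]
    [HopfAlgebra k H] [FiniteDimensional k H] [Ring A] [Algebra k A]
    (α : PartialAction k H A)
    (hsymm : ∀ (h g : H) (a : A),
      α.act h (α.act g a) = LinearMap.mul' k A
        (TensorProduct.map ((α.act.flip a) ∘ₗ LinearMap.mulRight k g) (α.act.flip 1)
          (Coalgebra.comul h)))
    (hcentral : ∀ (h : H) (a : A), (α.act h 1) * a = a * (α.act h 1))
    (m : (A ⊗[k] H) →ₗ[k] (A ⊗[k] H) →ₗ[k] (A ⊗[k] H))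
    (hm : ∀ (a b : A) (h g : H), m (a ⊗ₜ[k] h) (b ⊗ₜ[k] g) =
      TensorProduct.map ((LinearMap.mulLeft k a) ∘ₗ (α.act.flip b)) (LinearMap.mulRight k g)
        (Coalgebra.comul h))
    (Φ : (A ⊗[k] H) →ₗ[k] A →ₗ[k] A)
    (hΦ : ∀ (a : A) (h : H) (b : A), Φ (a ⊗ₜ[k] h) b = a * α.act h b) :
    -- `σ(c)` is a left `A#H`-module endomorphism for each `c ∈ A^{\underline{H}}`
    (∀ c : A, (∀ h : H, α.act h c = c * α.act h 1) →
      ∀ x ∈ LinearMap.range (m.flip ((1 : A) ⊗ₜ[k] (1 : H))),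
        ∀ b : A, Φ x (b * c) = (Φ x b) * c) ∧
    -- `σ` is injective
    (∀ c c' : A, (∀ h : H, α.act h c = c * α.act h 1) →
      (∀ h : H, α.act h c' = c' * α.act h 1) → (∀ b : A, b * c = b * c') → c = c') ∧
    -- `σ` reverses multiplication (is an algebra map into the opposite algebra)
    (∀ c c' : A, (∀ h : H, α.act h c = c * α.act h 1) →
      (∀ h : H, α.act h c' = c' * α.act h 1) → ∀ b : A, b * (c * c') = (b * c) * c') ∧
    -- `σ` is surjective: every `A#H`-linear endomorphism of `A` is `σ(f(1))`
    (∀ f : A →ₗ[k] A,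
      (∀ x ∈ LinearMap.range (m.flip ((1 : A) ⊗ₜ[k] (1 : H))),
        ∀ b : A, f (Φ x b) = Φ x (f b)) →
      (∀ h : H, α.act h (f 1) = (f 1) * α.act h 1) ∧ (∀ a : A, f a = a * f 1)) :=
  invariants_iso_smash_endomorphisms_general α hcentral m hm Φ hΦ
end
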